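/- Let (X,τ) be a topological space, φ₁, φ₂ operations on X with φ₂ regular with respect to the family of φ₁-open sets, and A ⊆ X. Then A is φ₁₂-closed if and only if for every proper filter ℱ on X with A ∈ ℱ and every a ∈ X, if ℱ φ₁₂-converges to a then a ∈ A. -/

import Mathlib

/-! Regularity of `φ₂` makes the sets `φ₂ U`, `U` a `φ₁`-open set containing `x`, a filter base
(non-empty because `univ` is `φ₁`-open). A point `x` lies in `φ₁₂cl A` exactly when this base meets
`A` everywhere, i.e. when its filter restricted to `A` is proper; that restricted filter contains
`A` and `φ₁₂`-converges to `x`, while any proper filter containing `A` and `φ₁₂`-converging to `x`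
lies below it. -/

open Set

/-- An operation on a topological space `X`: a map `φ : Set X → Set X` with
`interior A ⊆ φ A` for all `A` and `φ ∅ = ∅`. -/
def IsOperation {X : Type*} [TopologicalSpace X] (φ : Set X → Set X) : Prop :=
  (∀ A : Set X, interior A ⊆ φ A) ∧ φ ∅ = ∅

/-- `A` is `φ`-open if `A ⊆ φ A`. -/
def PhiOpen {X : Type*} (φ : Set X → Set X) (A : Set X) : Prop := A ⊆ φ A

/-- `φ₁₂`-interior: `x ∈ φ₁₂int A` iff there is a `φ₁`-open `U` with `x ∈ U` and `φ₂ U ⊆ A`. -/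
def PhiInt {X : Type*} (φ₁ φ₂ : Set X → Set X) (A : Set X) : Set X :=
  {x | ∃ U : Set X, PhiOpen φ₁ U ∧ x ∈ U ∧ φ₂ U ⊆ A}

/-- `φ₁₂`-closure: `x ∈ φ₁₂cl A` iff `φ₂ U ∩ A ≠ ∅` for every `φ₁`-open `U` containing `x`. -/
def PhiCl {X : Type*} (φ₁ φ₂ : Set X → Set X) (A : Set X) : Set X :=
  {x | ∀ U : Set X, PhiOpen φ₁ U → x ∈ U → (φ₂ U ∩ A).Nonempty}

/-- `A` is `φ₁₂`-open if `A ⊆ φ₁₂int A`. -/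
def Phi12Open {X : Type*} (φ₁ φ₂ : Set X → Set X) (A : Set X) : Prop :=
  A ⊆ PhiInt φ₁ φ₂ A

/-- `φ₂` is regular w.r.t. the family of `φ₁`-open sets. -/
def PhiRegular {X : Type*} (φ₂ φ₁ : Set X → Set X) : Prop :=
  ∀ x : X, ∀ U V : Set X, PhiOpen φ₁ U → PhiOpen φ₁ V → x ∈ U → x ∈ V →
    ∃ W : Set X, PhiOpen φ₁ W ∧ x ∈ W ∧ φ₂ W ⊆ φ₂ U ∩ φ₂ V

/-- A filter `F` `φ₁₂`-converges to `a` if for every `φ₁`-open `U` containing `a`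
there is `S ∈ F` with `S ⊆ φ₂ U`. -/
def PhiConv {X : Type*} (φ₁ φ₂ : Set X → Set X) (F : Filter X) (a : X) : Prop :=
  ∀ U : Set X, PhiOpen φ₁ U → a ∈ U → ∃ S ∈ F, S ⊆ φ₂ U

/-- A filter `F` `φ₁₂`-accumulates to `a` if `a ∈ φ₁₂cl S` for every `S ∈ F`. -/
def PhiAcc {X : Type*} (φ₁ φ₂ : Set X → Set X) (F : Filter X) (a : X) : Prop :=
  ∀ S ∈ F, a ∈ PhiCl φ₁ φ₂ S

/-- `X` is `φ₁₂`-T₂. -/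
def PhiT2 {X : Type*} (φ₁ φ₂ : Set X → Set X) : Prop :=
  ∀ x y : X, x ≠ y → ∃ U V : Set X, PhiOpen φ₁ U ∧ PhiOpen φ₁ V ∧
    x ∈ U ∧ y ∈ V ∧ φ₂ U ∩ φ₂ V = ∅

/-- `A` is `φ₁₂`-compact relative to `X`. -/
def PhiCompact {X : Type*} (φ₁ φ₂ : Set X → Set X) (A : Set X) : Prop :=
  ∀ 𝒰 : Set (Set X), (∀ U ∈ 𝒰, PhiOpen φ₁ U) → A ⊆ ⋃₀ 𝒰 →
    ∃ 𝒰' ⊆ 𝒰, 𝒰'.Finite ∧ A ⊆ ⋃ U ∈ 𝒰', φ₂ U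

open Filter

def phiNhds {X : Type*} (φ₁ φ₂ : Set X → Set X) (x : X) : Filter X :=
  ⨅ (U) (_ : PhiOpen φ₁ U ∧ x ∈ U), 𝓟 (φ₂ U)

theorem IsOperation.phiOpen_univ {X : Type*} [TopologicalSpace X] {φ : Set X → Set X}
    (hφ : IsOperation φ) : PhiOpen φ univ := by
  simpa only [PhiOpen, interior_univ] using hφ.1 univ

section

variable {X : Type*} {φ₁ φ₂ : Set X → Set X}

theorem phiConv_iff_le_phiNhds {F : Filter X} {a : X} :
    PhiConv φ₁ φ₂ F a ↔ F ≤ phiNhds φ₁ φ₂ a := by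
  simp only [PhiConv, phiNhds, le_iInf_iff, le_principal_iff, exists_mem_subset_iff,
    and_imp]

theorem hasBasis_phiNhds [TopologicalSpace X] (h₁ : IsOperation φ₁) (hreg : PhiRegular φ₂ φ₁)
    (x : X) : (phiNhds φ₁ φ₂ x).HasBasis (fun U => PhiOpen φ₁ U ∧ x ∈ U) φ₂ :=
  hasBasis_biInf_principal'
    (fun U ⟨hU, hxU⟩ V ⟨hV, hxV⟩ =>
      let ⟨W, hW, hxW, hWUV⟩ := hreg x U V hU hV hxU hxV
      ⟨W, ⟨hW, hxW⟩, hWUV.trans inter_subset_left, hWUV.trans inter_subset_right⟩)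
    ⟨univ, h₁.phiOpen_univ, mem_univ x⟩

theorem mem_phiCl_iff_neBot [TopologicalSpace X] (h₁ : IsOperation φ₁)
    (hreg : PhiRegular φ₂ φ₁) {A : Set X} {x : X} :
    x ∈ PhiCl φ₁ φ₂ A ↔ (phiNhds φ₁ φ₂ x ⊓ 𝓟 A).NeBot := by
  rw [(hasBasis_phiNhds h₁ hreg x).inf_principal_neBot_iff]
  simp only [PhiCl, mem_ofPred_eq, and_imp]

end

theorem stmt_12_general {X : Type*} [TopologicalSpace X] (φ₁ φ₂ : Set X → Set X)
    (h₁ : IsOperation φ₁)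
    (hreg : PhiRegular φ₂ φ₁) (A : Set X) :
    PhiCl φ₁ φ₂ A ⊆ A ↔
      ∀ F : Filter X, F.NeBot → A ∈ F → ∀ a : X, PhiConv φ₁ φ₂ F a → a ∈ A := by
  constructor
  · intro hcl F hF hA a ha
    apply hcl
    rw [mem_phiCl_iff_neBot h₁ hreg]
    exact neBot_of_le (le_inf (phiConv_iff_le_phiNhds.1 ha) (le_principal_iff.2 hA))
  · intro hfil x hx
    rw [mem_phiCl_iff_neBot h₁ hreg] at hx
    exact hfil _ hx (mem_inf_of_right (mem_principal_self A)) x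
      (phiConv_iff_le_phiNhds.2 inf_le_left)

/-- If `φ₂` is regular w.r.t. the `φ₁`-open sets, then `A` is `φ₁₂`-closed
iff every proper filter containing `A` that `φ₁₂`-converges to some `a` satisfies `a ∈ A`. -/
theorem stmt_12 {X : Type*} [TopologicalSpace X] (φ₁ φ₂ : Set X → Set X)
    (h₁ : IsOperation φ₁) (h₂ : IsOperation φ₂)
    (hreg : PhiRegular φ₂ φ₁) (A : Set X) :
    PhiCl φ₁ φ₂ A ⊆ A ↔
      ∀ F : Filter X, F.NeBot → A ∈ F → ∀ a : X, PhiConv φ₁ φ₂ F a → a ∈ A :=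
  stmt_12_general φ₁ φ₂ h₁ hreg A
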